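/- arXiv:2301.03293 — 7 statements merged into one kernel-verified Lean document; each statement's English description precedes it below -/
import Mathlib

section
/- Let h : [0,∞) → ℝ be twice differentiable with h(0) ≥ 0, and suppose p₁, p₂ > 0 satisfy p₁ > −h'(0)/h(0) (when h(0) > 0) and the function v := h' + p₁·h satisfies v'(t) + p₂·v(t) ≥ 0 for all t ≥ 0 with v(0) > 0. Then h(t) ≥ 0 for all t ≥ 0. -/
/-- With the integrating factor `exp (c t)`, `(exp (c t) * f t)' = exp (c t) * (f' t + c * f t) ≥ 0`,
so `exp (c t) * f t` is monotone and keeps the sign of `f a`. -/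
lemma nonneg_of_deriv_add_mul_nonneg {f f' : ℝ → ℝ} {a c : ℝ}
    (hf : ∀ t ≥ a, HasDerivAt f (f' t) t) (ha : 0 ≤ f a)
    (hineq : ∀ t ≥ a, 0 ≤ f' t + c * f t) :
    ∀ t ≥ a, 0 ≤ f t := by
  set g : ℝ → ℝ := fun t => Real.exp (c * t) * f t
  have hg : ∀ t ≥ a, HasDerivAt g (Real.exp (c * t) * (f' t + c * f t)) t := fun t ht => by
    refine ((((hasDerivAt_id t).const_mul c).exp).mul (hf t ht)).congr_deriv ?_
    simp only [id, mul_one]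
    ring
  have hmono : MonotoneOn g (Set.Ici a) := by
    refine monotoneOn_of_hasDerivWithinAt_nonneg (convex_Ici a)
      (fun t ht => (hg t ht).continuousAt.continuousWithinAt)
      (fun t ht => (hg t (interior_subset ht)).hasDerivWithinAt) fun t ht => ?_
    exact mul_nonneg (Real.exp_pos _).le (hineq t (interior_subset ht))
  intro t ht
  have hga : 0 ≤ g a := mul_nonneg (Real.exp_pos _).le ha
  have hgt : 0 ≤ Real.exp (c * t) * f t := hga.trans (hmono Set.self_mem_Ici ht ht)
  exact nonneg_of_mul_nonneg_right hgt (Real.exp_pos _)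

theorem stmt_1_general (h h' h'' : ℝ → ℝ) (p₁ p₂ : ℝ)
    (hd : ∀ t ≥ (0:ℝ), HasDerivAt h (h' t) t)
    (hd' : ∀ t ≥ (0:ℝ), HasDerivAt h' (h'' t) t)
    (h0 : h 0 ≥ 0)
    (hv : ∀ t ≥ (0:ℝ), (h'' t + p₁ * h' t) + p₂ * (h' t + p₁ * h t) ≥ 0)
    (hv0 : h' 0 + p₁ * h 0 > 0) :
    ∀ t ≥ (0:ℝ), h t ≥ 0 := by
  have hv_nonneg : ∀ t ≥ (0:ℝ), 0 ≤ h' t + p₁ * h t :=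
    nonneg_of_deriv_add_mul_nonneg (fun t ht => (hd' t ht).add ((hd t ht).const_mul p₁))
      hv0.le hv
  exact nonneg_of_deriv_add_mul_nonneg hd h0 hv_nonneg

theorem stmt_1 (h h' h'' : ℝ → ℝ) (p₁ p₂ : ℝ)
    (hp₁ : 0 < p₁) (hp₂ : 0 < p₂)
    (hd : ∀ t ≥ (0:ℝ), HasDerivAt h (h' t) t)
    (hd' : ∀ t ≥ (0:ℝ), HasDerivAt h' (h'' t) t)
    (h0 : h 0 ≥ 0)
    (hp₁cond : 0 < h 0 → p₁ > -(h' 0) / h 0)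
    (hv : ∀ t ≥ (0:ℝ), (h'' t + p₁ * h' t) + p₂ * (h' t + p₁ * h t) ≥ 0)
    (hv0 : h' 0 + p₁ * h 0 > 0) :
    ∀ t ≥ (0:ℝ), h t ≥ 0 :=
  stmt_1_general h h' h'' p₁ p₂ hd hd' h0 hv hv0
end

section
/- Let h be twice differentiable on [0,∞) with h(0) > 0. If p₁ > 0, p₁ > −h'(0)/h(0), p₂ > 0, p₂ > −(h''(0) + p₁h'(0))/(h'(0) + p₁h(0)), and h''(t) + (p₁+p₂)h'(t) + p₁p₂·h(t) ≥ 0 for all t ≥ 0, then h(t) > 0 for all t ≥ 0. -/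
/-!
Write `g = h' + p₁ h`. The hypothesis says `g' + p₂ g ≥ 0`, so `e^{p₂ t} g(t)` is nondecreasing and
`g` stays positive because `g(0) > 0` (this is `p₁ > -h'(0)/h(0)`). Then `h' + p₁ h = g > 0` makes
`e^{p₁ t} h(t)` nondecreasing, and `h` stays positive because `h(0) > 0`.
-/

open Set Real

lemma monotoneOn_Ici_of_hasDerivAt_nonneg {f f' : ℝ → ℝ} {a : ℝ}
    (hf : ∀ t ≥ a, HasDerivAt f (f' t) t) (hf' : ∀ t ≥ a, 0 ≤ f' t) :
    MonotoneOn f (Ici a) := by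
  refine monotoneOn_of_hasDerivWithinAt_nonneg (f' := f') (convex_Ici a)
    (fun t ht => (hf t ht).continuousAt.continuousWithinAt) (fun t ht => ?_) (fun t ht => ?_)
  · rw [interior_Ici] at ht
    exact (hf t (le_of_lt ht)).hasDerivWithinAt
  · rw [interior_Ici] at ht
    exact hf' t (le_of_lt ht)

lemma pos_of_hasDerivAt_of_add_mul_nonneg {f f' : ℝ → ℝ} {a p : ℝ}
    (hf : ∀ t ≥ a, HasDerivAt f (f' t) t) (ha : 0 < f a)
    (hineq : ∀ t ≥ a, 0 ≤ f' t + p * f t) :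
    ∀ t ≥ a, 0 < f t := by
  have hderiv : ∀ t ≥ a, HasDerivAt (fun s => exp (p * s) * f s)
      (exp (p * t) * (f' t + p * f t)) t := by
    intro t ht
    have hexp := ((hasDerivAt_id t).const_mul p).exp
    exact (hexp.mul (hf t ht)).congr_deriv (by simp only [id, mul_one]; ring)
  have hmono := monotoneOn_Ici_of_hasDerivAt_nonneg hderiv
    (fun t ht => mul_nonneg (exp_pos _).le (hineq t ht))
  intro t ht
  have hle : exp (p * a) * f a ≤ exp (p * t) * f t := hmono self_mem_Ici ht ht
  exact pos_of_mul_pos_right ((mul_pos (exp_pos _) ha).trans_le hle) (exp_pos _).le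

theorem stmt_2_general (h h' h'' : ℝ → ℝ) (p₁ p₂ : ℝ)
    (hd : ∀ t ≥ (0:ℝ), HasDerivAt h (h' t) t)
    (hd' : ∀ t ≥ (0:ℝ), HasDerivAt h' (h'' t) t)
    (h0 : 0 < h 0)
    (hp₁' : p₁ > -(h' 0) / h 0)
    (hineq : ∀ t ≥ (0:ℝ), h'' t + (p₁ + p₂) * h' t + p₁ * p₂ * h t ≥ 0) :
    ∀ t ≥ (0:ℝ), 0 < h t := by
  have hg0 : 0 < h' 0 + p₁ * h 0 := by
    have := (div_lt_iff₀ h0).mp hp₁'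
    linarith
  have hg : ∀ t ≥ (0:ℝ), 0 < h' t + p₁ * h t :=
    pos_of_hasDerivAt_of_add_mul_nonneg (p := p₂)
      (fun t ht => (hd' t ht).add ((hd t ht).const_mul p₁)) hg0
      (fun t ht => by linarith [hineq t ht])
  exact pos_of_hasDerivAt_of_add_mul_nonneg (p := p₁) hd h0 (fun t ht => (hg t ht).le)

theorem stmt_2 (h h' h'' : ℝ → ℝ) (p₁ p₂ : ℝ)
    (hd : ∀ t ≥ (0:ℝ), HasDerivAt h (h' t) t)
    (hd' : ∀ t ≥ (0:ℝ), HasDerivAt h' (h'' t) t)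
    (h0 : 0 < h 0)
    (hp₁ : 0 < p₁) (hp₁' : p₁ > -(h' 0) / h 0)
    (hp₂ : 0 < p₂) (hp₂' : p₂ > -(h'' 0 + p₁ * h' 0) / (h' 0 + p₁ * h 0))
    (hineq : ∀ t ≥ (0:ℝ), h'' t + (p₁ + p₂) * h' t + p₁ * p₂ * h t ≥ 0) :
    ∀ t ≥ (0:ℝ), 0 < h t :=
  stmt_2_general h h' h'' p₁ p₂ hd hd' h0 hp₁' hineq
end

section
/- For x_S, x_D ∈ ℝ², x_S ≠ x_D, and k_D > 0, the Jacobian with respect to x_D of the map x_D ↦ k_D·(x_S − x_D)/‖x_S − x_D‖³ has determinant equal to −2k_D²/‖x_D − x_S‖⁶, which is nonzero. -/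
/-!
Writing `v = xS - xD` and `r = ‖v‖`, the Jacobian is `-(kD / r³) • id + (3 kD / r⁵) ⟪v, ·⟫ v`,
a nonzero multiple of the identity plus a rank-one map. By the matrix determinant lemma
(a multiple of a transvection) its determinant in the plane is
`(kD / r³)² (1 - 3 r² / r²) = -2 kD² / r⁶`.
-/

/-- The dog-repulsion force field felt by a sheep at `xS` from a dog at `xD`. -/
noncomputable def repulsion (kD : ℝ) (xS xD : EuclideanSpace ℝ (Fin 2)) :
    EuclideanSpace ℝ (Fin 2) :=
  kD • (‖xS - xD‖ ^ 3)⁻¹ • (xS - xD)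

open Module

theorem LinearMap.det_smul_id_add_smulRight {K V : Type*} [Field K] [AddCommGroup V]
    [Module K V] [FiniteDimensional K V] {a : K} (ha : a ≠ 0) (f : Dual K V) (w : V) :
    LinearMap.det (a • LinearMap.id + f.smulRight w) = a ^ finrank K V * (1 + f w / a) := by
  have h : a • LinearMap.id + f.smulRight w = a • LinearMap.transvection (a⁻¹ • f) w := by
    ext x
    simp [LinearMap.transvection.apply, smul_add, smul_smul, ha]
  rw [h, LinearMap.det_smul, LinearMap.transvection.det]
  simp [div_eq_inv_mul]

section InnerProductSpace

variable {E : Type*} [NormedAddCommGroup E] [InnerProductSpace ℝ E]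

theorem hasFDerivAt_norm_of_ne_zero {x : E} (hx : x ≠ 0) :
    HasFDerivAt (‖·‖) (‖x‖⁻¹ • innerSL ℝ x) x := by
  have h := (hasStrictFDerivAt_norm_sq x).hasFDerivAt.sqrt (by simpa using hx)
  simp only [Real.sqrt_sq (norm_nonneg _)] at h
  refine h.congr_fderiv (ContinuousLinearMap.ext fun y => ?_)
  simp only [smul_apply, coe_innerSL_apply, smul_eq_mul, one_div, mul_inv_rev, nsmul_eq_mul,
    Nat.cast_ofNat]
  ring

theorem hasFDerivAt_inv_norm_pow_smul (n : ℕ) {x : E} (hx : x ≠ 0) :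
    HasFDerivAt (fun y : E => (‖y‖ ^ n)⁻¹ • y)
      ((‖x‖ ^ n)⁻¹ • ContinuousLinearMap.id ℝ E
        - (n / ‖x‖ ^ (n + 2)) • (innerSL ℝ x).smulRight x) x := by
  have hr : ‖x‖ ≠ 0 := norm_ne_zero_iff.mpr hx
  have h := ((hasDerivAt_inv (pow_ne_zero n hr)).comp_hasFDerivAt x
    ((hasFDerivAt_norm_of_ne_zero hx).pow n)).smul (hasFDerivAt_id x)
  refine h.congr_fderiv (ContinuousLinearMap.ext fun y => ?_)
  simp only [Function.comp_apply, nsmul_eq_mul, neg_smul, id_eq, add_apply, smul_apply,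
    ContinuousLinearMap.id_apply, ContinuousLinearMap.smulRight_apply, neg_apply,
    coe_innerSL_apply, smul_eq_mul, sub_apply]
  match_scalars
  · rfl
  · rcases n with _ | n
    · simp
    · simp only [Nat.add_sub_cancel]
      field_simp
      ring

end InnerProductSpace

theorem hasFDerivAt_repulsion (kD : ℝ) {xS xD : EuclideanSpace ℝ (Fin 2)} (hne : xS ≠ xD) :
    HasFDerivAt (repulsion kD xS)
      ((-(kD / ‖xS - xD‖ ^ 3)) • ContinuousLinearMap.id ℝ _
        + ((3 * kD / ‖xS - xD‖ ^ 5) • innerSL ℝ (xS - xD)).smulRight (xS - xD)) xD := by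
  have h := ((hasFDerivAt_inv_norm_pow_smul 3 (sub_ne_zero.mpr hne)).comp xD
    ((hasFDerivAt_id xD).const_sub xS)).const_smul kD
  refine h.congr_fderiv (ContinuousLinearMap.ext fun y => ?_)
  simp only [Nat.cast_ofNat, Nat.reduceAdd, map_sub, ContinuousLinearMap.comp_neg,
    ContinuousLinearMap.comp_id, neg_sub, smul_apply, sub_apply,
    ContinuousLinearMap.smulRight_apply, coe_innerSL_apply, ContinuousLinearMap.id_apply,
    neg_smul, add_apply, neg_apply, smul_eq_mul]
  match_scalars <;> ring

theorem stmt_3 (kD : ℝ) (hkD : 0 < kD) (xS xD : EuclideanSpace ℝ (Fin 2))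
    (hne : xS ≠ xD) :
    LinearMap.det ((fderiv ℝ (fun y : EuclideanSpace ℝ (Fin 2) => repulsion kD xS y) xD :
        EuclideanSpace ℝ (Fin 2) →L[ℝ] EuclideanSpace ℝ (Fin 2)) :
        EuclideanSpace ℝ (Fin 2) →ₗ[ℝ] EuclideanSpace ℝ (Fin 2))
      = -2 * kD ^ 2 / ‖xD - xS‖ ^ 6 ∧
    (-2 * kD ^ 2 / ‖xD - xS‖ ^ 6 : ℝ) ≠ 0 := by
  have hr : 0 < ‖xS - xD‖ := norm_pos_iff.mpr (sub_ne_zero.mpr hne)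
  rw [(hasFDerivAt_repulsion kD hne).fderiv, norm_sub_rev xD xS]
  refine ⟨?_, by positivity⟩
  refine (LinearMap.det_smul_id_add_smulRight (neg_ne_zero.mpr (by positivity)) _ _).trans ?_
  simp only [finrank_euclideanSpace_fin, ContinuousLinearMap.coe_coe, smul_apply,
    innerSL_apply_apply, real_inner_self_eq_norm_sq, smul_eq_mul]
  field_simp
  ring
end

section
/- For x_S, x_D ∈ ℝ² with x_S ≠ x_D and any nonzero vector w ∈ ℝ², the row vector wᵀ·J, where J is the Jacobian in x_D of x_D ↦ k_D(x_S − x_D)/‖x_S − x_D‖³ with k_D > 0, is nonzero; hence the linear constraint wᵀ·J·u ≤ b on u ∈ ℝ² is feasible for every b ∈ ℝ. -/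
/-!
The Jacobian of the inverse-cube field `v ↦ ‖v‖⁻³ v` at `z ≠ 0` is `‖z‖⁻³ (I - 3 ẑ ẑᵀ)`,
which acts as `-2` along `z` and as `1` on `z^⊥`, so it is invertible. Hence the Jacobian `J` of
the repulsion is invertible too, `w = J u` for some `u`, and then `⟪w, J u⟫ = ‖w‖² ≠ 0`;
rescaling `u` makes `⟪w, J u⟫` take any prescribed value `b`.
-/

open scoped RealInnerProductSpace

section InverseCubeField

variable {E : Type*} [NormedAddCommGroup E] [InnerProductSpace ℝ E]

lemma injective_id_sub_smul_smulRight_innerSL {z : E} {c : ℝ} (hc : c * ‖z‖ ^ 2 ≠ 1) :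
    Function.Injective (ContinuousLinearMap.id ℝ E - c • (innerSL ℝ z).smulRight z) := by
  refine (injective_iff_map_eq_zero _).mpr fun u hu => ?_
  have hu_eq : u = (c * ⟪z, u⟫) • z := by
    simpa [sub_eq_zero, smul_smul] using hu
  have hzu : ⟪z, u⟫ = 0 := by
    have h : ⟪z, u⟫ = c * ⟪z, u⟫ * ‖z‖ ^ 2 := by
      conv_lhs => rw [hu_eq]
      rw [real_inner_smul_right, real_inner_self_eq_norm_sq]
    have h' : ⟪z, u⟫ * (1 - c * ‖z‖ ^ 2) = 0 := by linear_combination h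
    exact (mul_eq_zero.mp h').resolve_right (sub_ne_zero.mpr hc.symm)
  rw [hu_eq, hzu, mul_zero, zero_smul]

lemma hasFDerivAt_norm_of_ne_zero_s4 {z : E} (hz : z ≠ 0) :
    HasFDerivAt (fun v : E => ‖v‖) (‖z‖⁻¹ • innerSL ℝ z) z := by
  have h := ((hasFDerivAt_id z).norm_sq).sqrt (by simpa using hz)
  simp only [id, Real.sqrt_sq (norm_nonneg _)] at h
  refine h.congr_fderiv ?_
  ext u
  simp only [one_div, mul_inv_rev, ContinuousLinearMap.comp_id, smul_apply, coe_innerSL_apply,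
    nsmul_eq_mul, Nat.cast_ofNat, smul_eq_mul]
  field_simp

lemma hasFDerivAt_inv_norm_pow_three_smul {z : E} (hz : z ≠ 0) :
    HasFDerivAt (fun v : E => (‖v‖ ^ 3)⁻¹ • v)
      ((‖z‖ ^ 3)⁻¹ • (ContinuousLinearMap.id ℝ E - (3 / ‖z‖ ^ 2) • (innerSL ℝ z).smulRight z))
      z := by
  have hz' : ‖z‖ ≠ 0 := norm_ne_zero_iff.mpr hz
  refine (((hasDerivAt_inv (pow_ne_zero 3 hz')).comp_hasFDerivAt z
    ((hasFDerivAt_norm_of_ne_zero_s4 hz).pow 3)).smul (hasFDerivAt_id z)).congr_fderiv ?_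
  ext u
  simp only [FunLike.coe_smul, FunLike.coe_sub, FunLike.coe_add, Pi.add_apply, Pi.sub_apply,
    Pi.smul_apply, ContinuousLinearMap.smulRight_apply, ContinuousLinearMap.id_apply,
    innerSL_apply_apply, Function.comp_apply, id]
  match_scalars
  · ring
  · simp only [smul_eq_mul, nsmul_eq_mul]
    field_simp
    ring

lemma injective_inv_norm_pow_three_jacobian {z : E} (hz : z ≠ 0) :
    Function.Injective (((‖z‖ ^ 3)⁻¹ •
      (ContinuousLinearMap.id ℝ E - (3 / ‖z‖ ^ 2) • (innerSL ℝ z).smulRight z) : E →L[ℝ] E)) := by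
  have hz' : ‖z‖ ≠ 0 := norm_ne_zero_iff.mpr hz
  have hc : 3 / ‖z‖ ^ 2 * ‖z‖ ^ 2 ≠ 1 := by
    rw [div_mul_cancel₀ _ (pow_ne_zero 2 hz')]
    norm_num
  exact (smul_right_injective E (inv_ne_zero (pow_ne_zero 3 hz'))).comp
    (injective_id_sub_smul_smulRight_innerSL hc)

end InverseCubeField

lemma injective_fderiv_repulsion {kD : ℝ} (hkD : kD ≠ 0) {xS xD : EuclideanSpace ℝ (Fin 2)}
    (hne : xS ≠ xD) :
    Function.Injective (fderiv ℝ (fun y => repulsion kD xS y) xD) := by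
  have hz : xS - xD ≠ 0 := sub_ne_zero.mpr hne
  have hderiv : HasFDerivAt (fun y => repulsion kD xS y) _ xD :=
    ((hasFDerivAt_inv_norm_pow_three_smul hz).comp xD
      ((hasFDerivAt_id xD).const_sub xS)).const_smul kD
  rw [hderiv.fderiv]
  exact (smul_right_injective _ hkD).comp
    ((injective_inv_norm_pow_three_jacobian hz).comp neg_injective)

theorem stmt_4 (kD : ℝ) (hkD : 0 < kD) (xS xD : EuclideanSpace ℝ (Fin 2))
    (hne : xS ≠ xD) (w : EuclideanSpace ℝ (Fin 2)) (hw : w ≠ 0) :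
    (∃ u : EuclideanSpace ℝ (Fin 2),
        ⟪w, (fderiv ℝ (fun y : EuclideanSpace ℝ (Fin 2) => repulsion kD xS y) xD) u⟫ ≠ 0) ∧
    ∀ b : ℝ, ∃ u : EuclideanSpace ℝ (Fin 2),
        ⟪w, (fderiv ℝ (fun y : EuclideanSpace ℝ (Fin 2) => repulsion kD xS y) xD) u⟫ ≤ b := by
  set J := fderiv ℝ (fun y : EuclideanSpace ℝ (Fin 2) => repulsion kD xS y) xD
  obtain ⟨u, hu⟩ : ∃ u, J u = w :=
    (LinearMap.injective_iff_surjective (f := (J : _ →ₗ[ℝ] _))).mp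
      (injective_fderiv_repulsion hkD.ne' hne) w
  have hwu : ⟪w, J u⟫ ≠ 0 := by
    rw [hu]
    exact inner_self_ne_zero.mpr hw
  refine ⟨⟨u, hwu⟩, fun b => ⟨(b / ⟪w, J u⟫) • u, le_of_eq ?_⟩⟩
  rw [map_smul, inner_smul_right, div_mul_cancel₀ b hwu]
end

section
/- For x, y ∈ ℝ² with x ≠ y and k_S, R > 0, the Frobenius norm of the Jacobian with respect to y of the map y ↦ k_S(1 − R³/‖y − x‖³)(y − x) is at most √2·k_S + (3 + √2)·k_S·R³/‖x − y‖³. -/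
/-- Frobenius norm of a continuous linear map on `ℝ²`, via its matrix entries in the
standard Euclidean basis. -/
noncomputable def frobNorm
    (L : EuclideanSpace ℝ (Fin 2) →L[ℝ] EuclideanSpace ℝ (Fin 2)) : ℝ :=
  Real.sqrt (∑ i : Fin 2, ∑ j : Fin 2, (L (EuclideanSpace.single j 1) i) ^ 2)

/-!
With `w = z - x` the map is `kS • w - kS R³ • (‖w‖ ^ 3)⁻¹ • w`. The Jacobian of
`w ↦ (‖w‖ ^ 3)⁻¹ • w` at `v` is `‖v‖⁻³ I - 3 ‖v‖⁻⁵ v vᵀ`, and since the Frobenius norm is the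
Euclidean norm of the matrix entries, the triangle inequality with `‖I‖_F = √2` and
`‖v vᵀ‖_F = ‖v‖²` bounds it by `(3 + √2) / ‖v‖³`. One more triangle inequality gives the claim.
-/

open scoped RealInnerProductSpace

theorem hasFDerivAt_inv_norm_cube_smul {E : Type*} [NormedAddCommGroup E]
    [InnerProductSpace ℝ E] {v : E} (hv : v ≠ 0) :
    HasFDerivAt (fun z : E => (‖z‖ ^ 3)⁻¹ • z)
      ((‖v‖ ^ 3)⁻¹ • ContinuousLinearMap.id ℝ E - (3 / ‖v‖ ^ 5) • (innerSL ℝ v).smulRight v)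
      v := by
  have hv' : 0 < ‖v‖ := norm_pos_iff.mpr hv
  have hcube : HasFDerivAt (fun z : E => ‖z‖ ^ 3) ((3 * ‖v‖) • innerSL ℝ v) v := by
    convert hasFDerivAt_norm_rpow v (p := 3) (by norm_num) using 1 <;> norm_num
  have hinv := ((hasDerivAt_inv (by positivity)).comp_hasFDerivAt v hcube).smul
    (hasFDerivAt_id v)
  refine hinv.congr_fderiv ?_
  ext w
  simp only [add_apply, smul_apply, ContinuousLinearMap.smulRight_apply,
    ContinuousLinearMap.id_apply, innerSL_apply_apply, id, Function.comp_apply, smul_smul,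
    sub_eq_add_neg, ← neg_smul]
  congr 2
  rw [smul_eq_mul, neg_mul, neg_mul]
  field_simp

noncomputable def matrixEntries :
    (EuclideanSpace ℝ (Fin 2) →L[ℝ] EuclideanSpace ℝ (Fin 2)) →ₗ[ℝ]
      EuclideanSpace ℝ (Fin 2 × Fin 2) where
  toFun L := WithLp.toLp 2 fun p => L (EuclideanSpace.single p.2 1) p.1
  map_add' L M := by ext; simp
  map_smul' c L := by ext; simp

section FrobNorm

variable (L M : EuclideanSpace ℝ (Fin 2) →L[ℝ] EuclideanSpace ℝ (Fin 2))

theorem frobNorm_eq_norm_matrixEntries : frobNorm L = ‖matrixEntries L‖ := by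
  rw [frobNorm, EuclideanSpace.norm_eq, Fintype.sum_prod_type]
  simp [matrixEntries]

theorem frobNorm_sub_le : frobNorm (L - M) ≤ frobNorm L + frobNorm M := by
  simpa only [frobNorm_eq_norm_matrixEntries, map_sub] using norm_sub_le _ _

theorem frobNorm_smul (c : ℝ) : frobNorm (c • L) = |c| * frobNorm L := by
  simp only [frobNorm_eq_norm_matrixEntries, map_smul, norm_smul, Real.norm_eq_abs]

end FrobNorm

theorem frobNorm_id : frobNorm (ContinuousLinearMap.id ℝ _) = Real.sqrt 2 := by
  simp [frobNorm]

theorem frobNorm_innerSL_smulRight (v : EuclideanSpace ℝ (Fin 2)) :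
    frobNorm ((innerSL ℝ v).smulRight v) = ‖v‖ ^ 2 := by
  rw [frobNorm, EuclideanSpace.norm_eq, Real.sq_sqrt (by positivity)]
  simp only [Fin.sum_univ_two, ContinuousLinearMap.smulRight_apply, innerSL_apply_apply,
    EuclideanSpace.inner_single_right, PiLp.smul_apply, smul_eq_mul, conj_trivial,
    Real.norm_eq_abs, sq_abs]
  rw [← Real.sqrt_sq (by positivity : 0 ≤ v 0 ^ 2 + v 1 ^ 2)]
  congr 1
  ring

theorem frobNorm_jacobian_inv_norm_cube_smul_le {v : EuclideanSpace ℝ (Fin 2)} (hv : v ≠ 0) :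
    frobNorm ((‖v‖ ^ 3)⁻¹ • ContinuousLinearMap.id ℝ _ -
        (3 / ‖v‖ ^ 5) • (innerSL ℝ v).smulRight v) ≤ (3 + Real.sqrt 2) / ‖v‖ ^ 3 := by
  have hv' : 0 < ‖v‖ := norm_pos_iff.mpr hv
  calc _ ≤ _ := frobNorm_sub_le _ _
    _ = (3 + Real.sqrt 2) / ‖v‖ ^ 3 := by
      rw [frobNorm_smul, frobNorm_smul, frobNorm_id, frobNorm_innerSL_smulRight,
        abs_of_pos (by positivity), abs_of_pos (by positivity)]
      field_simp
      ring

theorem stmt_10 (kS R : ℝ) (hkS : 0 < kS) (hR : 0 < R)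
    (x y : EuclideanSpace ℝ (Fin 2)) (hne : x ≠ y) :
    frobNorm (fderiv ℝ (fun z : EuclideanSpace ℝ (Fin 2) =>
        kS • (1 - R ^ 3 / ‖z - x‖ ^ 3) • (z - x)) y)
      ≤ Real.sqrt 2 * kS + (3 + Real.sqrt 2) * kS * R ^ 3 / ‖x - y‖ ^ 3 := by
  have hv : y - x ≠ 0 := sub_ne_zero.mpr hne.symm
  have hsplit : (fun w : EuclideanSpace ℝ (Fin 2) => kS • (1 - R ^ 3 / ‖w‖ ^ 3) • w) =
      fun w => kS • w - (kS * R ^ 3) • ((‖w‖ ^ 3)⁻¹ • w) := by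
    funext w
    rw [smul_smul, smul_smul, ← sub_smul]
    congr 1
    ring
  have hderiv : HasFDerivAt (fun w => kS • w - (kS * R ^ 3) • ((‖w‖ ^ 3)⁻¹ • w)) _ (y - x) :=
    ((hasFDerivAt_id (y - x)).const_smul kS).sub
      ((hasFDerivAt_inv_norm_cube_smul hv).const_smul (kS * R ^ 3))
  rw [fderiv_comp_sub (f := fun w => kS • (1 - R ^ 3 / ‖w‖ ^ 3) • w), hsplit, hderiv.fderiv,
    norm_sub_rev x y]
  calc _ ≤ _ := frobNorm_sub_le _ _
    _ ≤ kS * Real.sqrt 2 + kS * R ^ 3 * ((3 + Real.sqrt 2) / ‖y - x‖ ^ 3) := by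
      rw [frobNorm_smul, frobNorm_smul, frobNorm_id, abs_of_pos hkS, abs_of_pos (by positivity)]
      gcongr
      exact frobNorm_jacobian_inv_norm_cube_smul_le hv
    _ = _ := by ring
end

section
/- Under the distance bounds L_S ≤ ‖x_{S_i} − x_{S_j}‖ ≤ M_S (i ≠ j), ‖x_{S_i} − x_{D_l}‖ ≥ L_D, ‖x_{S_i} − x_G‖ ≤ M_G, ‖x_{S_i} − x_P‖ ≤ M_P, and assuming ‖u_{D_l}‖ ≤ U_max for all dogs l and h(x_{S_i}) ≥ 0, the quantity b^H_i := f_iᵀf_i + (β/2)h + (x_{S_i} − x_P)ᵀ(Σ_j J^S_{ji} f_j + α f_i + Σ_{l≠k} J^D_{li} u_{D_l}) is bounded below by −(α + λ_M + (n−1)λ_S)·M_P·((n−1)F_max + k_G M_G + n k_D/L_D²) − (n−1)λ_D M_P U_max, where λ_S = √2 k_S + (3+√2)k_S R³/L_S³, λ_D = (3+√2)k_D/L_D³, λ_M = (n−1)k_S(√2 + (3+√2)R³/L_S³) + √2 k_G + n(3+√2)k_D/L_D³, and F_max = max(k_S L_S + k_S R³/L_S², k_S M_S + k_S R³/M_S²).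 In particular b^H_i is finite (bounded below). -/
/-!
The first two terms of `b^H_i` are nonnegative, and Cauchy–Schwarz bounds the last one below by
`-M_P` times the norm of `Σ_j J^S_{ji} f_j + α f_i + Σ_{l≠k} J^D_{li} u_{D_l}`, so it suffices to
bound the norms of the `f_j` and of the Jacobians.

In `f_j`, a cohesion term has norm at most `k_S (t + R³/t²)` where `t ∈ [L_S, M_S]` is the
inter-sheep distance; this function is convex in `t`, hence bounded by its value at an endpoint,
which is `F_max`. The Jacobians are sums of derivatives of `w ↦ (‖w‖³)⁻¹ • w`, whose operator norm
at `z` is at most `4 / ‖z‖³`; since `1 ≤ √2` and `4 ≤ 3 + √2` this gives `λ_S`, `λ_M` and `λ_D`.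
-/

open scoped RealInnerProductSpace

/-- Reynolds–Boids dynamics of sheep `i`: inter-sheep cohesion/repulsion, attraction to the
goal `xG`, and repulsion from the dogs. -/
noncomputable def sheepDyn (kS kG kD R : ℝ) (xG : EuclideanSpace ℝ (Fin 2)) {n : ℕ}
    (xS xD : Fin n → EuclideanSpace ℝ (Fin 2)) (i : Fin n) : EuclideanSpace ℝ (Fin 2) :=
  (∑ j ∈ Finset.univ.erase i, kS • (1 - R ^ 3 / ‖xS j - xS i‖ ^ 3) • (xS j - xS i))
    + kG • (xG - xS i)
    + ∑ l, kD • (‖xS i - xD l‖ ^ 3)⁻¹ • (xS i - xD l)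

open Finset

theorem Finset.sum_apply_update_of_mem {ι α M : Type*} [DecidableEq ι] [AddCommGroup M]
    {s : Finset ι} {j : ι} (hj : j ∈ s) (g : α → M) (x : ι → α) (y : α) :
    ∑ j' ∈ s, g (Function.update x j y j') = g y + (∑ j' ∈ s, g (x j') - g (x j)) := by
  rw [← add_sum_erase s _ hj, ← add_sum_erase s _ hj, Function.update_self,
    sum_congr rfl fun j' hj' => by rw [Function.update_of_ne (ne_of_mem_erase hj')]]
  abel

theorem Fin.cast_card_univ_erase {n : ℕ} (i : Fin n) : (#(univ.erase i) : ℝ) = n - 1 := by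
  rw [card_erase_of_mem (mem_univ i), card_univ, Fintype.card_fin, Nat.cast_pred i.pos]

section SeminormedAddCommGroup

variable {E : Type*} [SeminormedAddCommGroup E]

theorem norm_sum_univ_erase_le {n : ℕ} (i : Fin n) {g : Fin n → E} {C : ℝ}
    (h : ∀ j ≠ i, ‖g j‖ ≤ C) : ‖∑ j ∈ univ.erase i, g j‖ ≤ (n - 1) * C := by
  refine (norm_sum_le_of_le _ fun j hj => h j (ne_of_mem_erase hj)).trans_eq ?_
  rw [sum_const, nsmul_eq_mul, Fin.cast_card_univ_erase]

theorem norm_sum_univ_le {n : ℕ} {g : Fin n → E} {C : ℝ} (h : ∀ j, ‖g j‖ ≤ C) :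
    ‖∑ j, g j‖ ≤ n * C := by
  refine (norm_sum_le_of_le _ fun j _ => h j).trans_eq ?_
  rw [sum_const, nsmul_eq_mul, card_univ, Fintype.card_fin]

end SeminormedAddCommGroup

section NormedSpace

variable {E F : Type*} [NormedAddCommGroup E] [NormedSpace ℝ E]
  [NormedAddCommGroup F] [NormedSpace ℝ F]

def HasBoundedFDerivAt (f : E → F) (C : ℝ) (x : E) : Prop :=
  ∃ f' : E →L[ℝ] F, HasFDerivAt f f' x ∧ ‖f'‖ ≤ C

namespace HasBoundedFDerivAt

variable {f g : E → F} {C D : ℝ} {x : E}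

theorem norm_fderiv_le (h : HasBoundedFDerivAt f C x) : ‖fderiv ℝ f x‖ ≤ C := by
  obtain ⟨f', hf, hC⟩ := h
  rwa [hf.fderiv]

theorem add (hf : HasBoundedFDerivAt f C x) (hg : HasBoundedFDerivAt g D x) :
    HasBoundedFDerivAt (fun y => f y + g y) (C + D) x :=
  let ⟨f', hf, hC⟩ := hf
  let ⟨g', hg, hD⟩ := hg
  ⟨f' + g', hf.add hg, (norm_add_le _ _).trans (add_le_add hC hD)⟩

theorem add_const (h : HasBoundedFDerivAt f C x) (c : F) :
    HasBoundedFDerivAt (fun y => f y + c) C x :=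
  let ⟨f', hf, hC⟩ := h
  ⟨f', hf.add_const c, hC⟩

theorem const_smul (h : HasBoundedFDerivAt f C x) (a : ℝ) :
    HasBoundedFDerivAt (fun y => a • f y) (|a| * C) x :=
  let ⟨f', hf, hC⟩ := h
  ⟨a • f', hf.const_smul a, by
    rw [norm_smul, Real.norm_eq_abs]; exact mul_le_mul_of_nonneg_left hC (abs_nonneg a)⟩

theorem sum {ι : Type*} {s : Finset ι} {f : ι → E → F}
    (h : ∀ i ∈ s, HasBoundedFDerivAt (f i) C x) :
    HasBoundedFDerivAt (fun y => ∑ i ∈ s, f i y) (#s * C) x := by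
  choose! f' hf hC using h
  refine ⟨∑ i ∈ s, f' i, HasFDerivAt.fun_sum hf, ?_⟩
  refine (norm_sum_le_of_le _ hC).trans_eq ?_
  rw [sum_const, nsmul_eq_mul]

theorem comp_sub_const (c : E) (h : HasBoundedFDerivAt f C (x - c)) :
    HasBoundedFDerivAt (fun y => f (y - c)) C x :=
  let ⟨_, hf, hC⟩ := h
  ⟨_, hf.comp x ((hasFDerivAt_id x).sub_const c), by rwa [ContinuousLinearMap.comp_id]⟩

theorem comp_const_sub (c : E) (h : HasBoundedFDerivAt f C (c - x)) :
    HasBoundedFDerivAt (fun y => f (c - y)) C x := by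
  obtain ⟨f', hf, hC⟩ := h
  refine ⟨-f', ?_, by rwa [norm_neg]⟩
  simpa [Function.comp_def] using hf.comp x ((hasFDerivAt_id x).const_sub c)

end HasBoundedFDerivAt

theorem hasBoundedFDerivAt_id (x : E) : HasBoundedFDerivAt (fun y : E => y) 1 x :=
  ⟨_, hasFDerivAt_id x, ContinuousLinearMap.norm_id_le⟩

theorem norm_sum_apply_add_smul_add_sum_apply_le {G : Type*} [NormedAddCommGroup G]
    [NormedSpace ℝ G] {n : ℕ} {A : Fin n → E →L[ℝ] E} {B : Fin n → G →L[ℝ] E}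
    {x : Fin n → E} {w : Fin n → G} {i k : Fin n} {α cM cS cD X W : ℝ} (hα : 0 ≤ α)
    (hAi : ‖A i‖ ≤ cM) (hA : ∀ j ≠ i, ‖A j‖ ≤ cS) (hB : ∀ l, ‖B l‖ ≤ cD)
    (hx : ∀ j, ‖x j‖ ≤ X) (hw : ∀ l, ‖w l‖ ≤ W) :
    ‖(∑ j, A j (x j)) + α • x i + ∑ l ∈ univ.erase k, B l (w l)‖
      ≤ (α + cM + (n - 1) * cS) * X + (n - 1) * cD * W := by
  have hα_smul : ‖α • x i‖ ≤ α * X := by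
    rw [norm_smul, Real.norm_eq_abs, abs_of_nonneg hα]
    exact mul_le_mul_of_nonneg_left (hx i) hα
  have hAsum : ‖∑ j, A j (x j)‖ ≤ cM * X + (n - 1) * (cS * X) := by
    rw [← add_sum_erase _ _ (mem_univ i)]
    exact (norm_add_le _ _).trans (add_le_add ((A i).le_of_opNorm_le_of_le hAi (hx i))
      (norm_sum_univ_erase_le i fun j hj => (A j).le_of_opNorm_le_of_le (hA j hj) (hx j)))
  have hBsum : ‖∑ l ∈ univ.erase k, B l (w l)‖ ≤ (n - 1) * (cD * W) :=
    norm_sum_univ_erase_le k fun l _ => (B l).le_of_opNorm_le_of_le (hB l) (hw l)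
  calc _ ≤ _ := norm_add₃_le
    _ ≤ _ := add_le_add (add_le_add hAsum hα_smul) hBsum
    _ = _ := by ring

end NormedSpace

section InnerProductSpace

variable {E : Type*} [NormedAddCommGroup E] [InnerProductSpace ℝ E]

theorem hasFDerivAt_norm_pow_three (z : E) :
    HasFDerivAt (fun w : E => ‖w‖ ^ 3) ((3 * ‖z‖) • innerSL ℝ z) z := by
  have := hasFDerivAt_norm_rpow z (p := 3) (by norm_num)
  norm_num at this
  exact_mod_cast this

theorem hasBoundedFDerivAt_inv_norm_pow_three_smul {L : ℝ} {z : E} (hL : 0 < L)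
    (hz : L ≤ ‖z‖) : HasBoundedFDerivAt (fun w : E => (‖w‖ ^ 3)⁻¹ • w) (4 / L ^ 3) z := by
  have hr : 0 < ‖z‖ := hL.trans_le hz
  have hinv := (hasDerivAt_inv (pow_pos hr 3).ne').comp_hasFDerivAt z
    (hasFDerivAt_norm_pow_three z)
  refine ⟨_, hinv.smul (hasFDerivAt_id z), ?_⟩
  calc _ ≤ ‖(‖z‖ ^ 3)⁻¹ • ContinuousLinearMap.id ℝ E‖
        + ‖(-((‖z‖ ^ 3) ^ 2)⁻¹ • (3 * ‖z‖) • innerSL ℝ z).smulRight z‖ := norm_add_le _ _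
    _ ≤ (‖z‖ ^ 3)⁻¹ * 1 + ((‖z‖ ^ 3) ^ 2)⁻¹ * (3 * ‖z‖ * ‖z‖) * ‖z‖ := by
        rw [ContinuousLinearMap.norm_smulRight_apply, norm_smul, norm_smul, norm_smul,
          innerSL_apply_norm]
        simp only [norm_neg, norm_inv, norm_pow, Real.norm_eq_abs, abs_norm, abs_mul]
        gcongr
        · exact ContinuousLinearMap.norm_id_le
        · simp
    _ = 4 / ‖z‖ ^ 3 := by field_simp; ring
    _ ≤ 4 / L ^ 3 := by gcongr

theorem hasBoundedFDerivAt_one_sub_div_norm_pow_three_smul (b : ℝ) {L : ℝ} {z : E}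
    (hL : 0 < L) (hz : L ≤ ‖z‖) :
    HasBoundedFDerivAt (fun w : E => (1 - b / ‖w‖ ^ 3) • w) (1 + |b| * (4 / L ^ 3)) z := by
  have h := (hasBoundedFDerivAt_id z).add
    ((hasBoundedFDerivAt_inv_norm_pow_three_smul hL hz).const_smul (-b))
  rw [abs_neg] at h
  convert h using 2 with w
  rw [sub_smul, one_smul, div_eq_mul_inv, ← smul_smul, neg_smul, sub_eq_add_neg]

theorem norm_one_sub_div_norm_pow_three_smul_le (b : ℝ) (z : E) :
    ‖(1 - b / ‖z‖ ^ 3) • z‖ ≤ ‖z‖ + |b| / ‖z‖ ^ 2 := by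
  rcases (norm_nonneg z).eq_or_lt with hz | hz
  · simp [← hz]
  calc ‖(1 - b / ‖z‖ ^ 3) • z‖ = |1 - b / ‖z‖ ^ 3| * ‖z‖ := by
        rw [norm_smul, Real.norm_eq_abs]
    _ ≤ (1 + |b| / ‖z‖ ^ 3) * ‖z‖ := by
        gcongr
        refine (abs_sub _ _).trans ?_
        rw [abs_one, abs_div, abs_of_pos (pow_pos hz 3)]
    _ = ‖z‖ + |b| / ‖z‖ ^ 2 := by field_simp

theorem norm_inv_norm_pow_three_smul (z : E) : ‖(‖z‖ ^ 3)⁻¹ • z‖ = (‖z‖ ^ 2)⁻¹ := by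
  rw [norm_smul, norm_inv, norm_pow, norm_norm]
  rcases (norm_nonneg z).eq_or_lt with hz | hz
  · simp [← hz]
  · field_simp

theorem neg_mul_le_inner_of_norm_le {a v : E} {M V : ℝ} (ha : ‖a‖ ≤ M) (hv : ‖v‖ ≤ V) :
    -(M * V) ≤ ⟪a, v⟫ :=
  (neg_le_neg (mul_le_mul ha hv (norm_nonneg v) ((norm_nonneg a).trans ha))).trans
    (neg_le_of_abs_le (abs_real_inner_le_norm a v))

end InnerProductSpace

theorem add_div_sq_le_max {a b L M t : ℝ} (ha : 0 ≤ a) (hb : 0 ≤ b) (hL : 0 < L)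
    (ht : t ∈ Set.Icc L M) :
    a * t + b / t ^ 2 ≤ max (a * L + b / L ^ 2) (a * M + b / M ^ 2) := by
  have hconv : ConvexOn ℝ (Set.Ioi 0) fun s : ℝ => a • s + b • s ^ (-2 : ℤ) :=
    (convexOn_id (convex_Ioi 0)).smul ha |>.add ((convexOn_zpow (-2)).smul hb)
  have := hconv.le_on_segment (x := L) (y := M) hL (hL.trans_le (ht.1.trans ht.2))
    (by rwa [segment_eq_Icc (ht.1.trans ht.2)])
  simpa [zpow_neg, div_eq_mul_inv] using this

theorem add_four_mul_le_sqrt_two_mul_add {a b : ℝ} (ha : 0 ≤ a) (hb : 0 ≤ b) :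
    a + 4 * b ≤ √2 * a + (3 + √2) * b := by
  nlinarith [Real.one_lt_sqrt_two]

section SheepDynamics

variable {n : ℕ} {kS kG kD R : ℝ} {xG : EuclideanSpace ℝ (Fin 2)}
  {xS xD : Fin n → EuclideanSpace ℝ (Fin 2)}

theorem sheepDyn_update_sheep_of_ne {i j : Fin n} (hji : j ≠ i) (y : EuclideanSpace ℝ (Fin 2)) :
    sheepDyn kS kG kD R xG (Function.update xS j y) xD i
      = kS • (1 - R ^ 3 / ‖y - xS i‖ ^ 3) • (y - xS i)
        + (sheepDyn kS kG kD R xG xS xD i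
          - kS • (1 - R ^ 3 / ‖xS j - xS i‖ ^ 3) • (xS j - xS i)) := by
  simp only [sheepDyn, Function.update_of_ne hji.symm]
  rw [sum_apply_update_of_mem (mem_erase.mpr ⟨hji, mem_univ j⟩)
    (fun w => kS • (1 - R ^ 3 / ‖w - xS i‖ ^ 3) • (w - xS i))]
  abel

theorem sheepDyn_update_dog (i l : Fin n) (y : EuclideanSpace ℝ (Fin 2)) :
    sheepDyn kS kG kD R xG xS (Function.update xD l y) i
      = kD • (‖xS i - y‖ ^ 3)⁻¹ • (xS i - y)
        + (sheepDyn kS kG kD R xG xS xD i - kD • (‖xS i - xD l‖ ^ 3)⁻¹ • (xS i - xD l)) := by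
  simp only [sheepDyn]
  rw [sum_apply_update_of_mem (mem_univ l) (fun w => kD • (‖xS i - w‖ ^ 3)⁻¹ • (xS i - w))]
  abel

theorem sheepDyn_update_self (i : Fin n) (y : EuclideanSpace ℝ (Fin 2)) :
    sheepDyn kS kG kD R xG (Function.update xS i y) xD i
      = (∑ j ∈ univ.erase i, kS • (1 - R ^ 3 / ‖xS j - y‖ ^ 3) • (xS j - y))
        + kG • (xG - y) + ∑ l, kD • (‖y - xD l‖ ^ 3)⁻¹ • (y - xD l) := by
  simp only [sheepDyn, Function.update_self]
  congr 2
  exact sum_congr rfl fun j hj => by rw [Function.update_of_ne (ne_of_mem_erase hj)]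

theorem norm_sheepDyn_le {LS MS MG LD : ℝ} (hkS : 0 ≤ kS) (hkG : 0 ≤ kG) (hkD : 0 ≤ kD)
    (hR : 0 ≤ R) (hLS : 0 < LS) (hLD : 0 < LD) (j : Fin n)
    (hSS : ∀ j' ≠ j, LS ≤ ‖xS j' - xS j‖ ∧ ‖xS j' - xS j‖ ≤ MS)
    (hSD : ∀ l, LD ≤ ‖xS j - xD l‖) (hSG : ‖xS j - xG‖ ≤ MG) :
    ‖sheepDyn kS kG kD R xG xS xD j‖
      ≤ ((n : ℝ) - 1) * max (kS * LS + kS * R ^ 3 / LS ^ 2) (kS * MS + kS * R ^ 3 / MS ^ 2)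
        + kG * MG + n * kD / LD ^ 2 := by
  have hsheep : ∀ j' ≠ j, ‖kS • (1 - R ^ 3 / ‖xS j' - xS j‖ ^ 3) • (xS j' - xS j)‖
      ≤ max (kS * LS + kS * R ^ 3 / LS ^ 2) (kS * MS + kS * R ^ 3 / MS ^ 2) := fun j' hj' => by
    rw [norm_smul, Real.norm_eq_abs, abs_of_nonneg hkS]
    calc _ ≤ kS * (‖xS j' - xS j‖ + |R ^ 3| / ‖xS j' - xS j‖ ^ 2) := by
          gcongr; exact norm_one_sub_div_norm_pow_three_smul_le _ _
      _ = kS * ‖xS j' - xS j‖ + kS * R ^ 3 / ‖xS j' - xS j‖ ^ 2 := by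
          rw [abs_of_nonneg (by positivity)]; ring
      _ ≤ _ := add_div_sq_le_max hkS (by positivity) hLS (hSS j' hj')
  have hdog : ∀ l, ‖kD • (‖xS j - xD l‖ ^ 3)⁻¹ • (xS j - xD l)‖ ≤ kD / LD ^ 2 := fun l => by
    rw [norm_smul, norm_inv_norm_pow_three_smul, Real.norm_eq_abs, abs_of_nonneg hkD,
      ← div_eq_mul_inv]
    gcongr
    exact hSD l
  have hgoal : ‖kG • (xG - xS j)‖ ≤ kG * MG := by
    rw [norm_smul, Real.norm_eq_abs, abs_of_nonneg hkG, norm_sub_rev]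
    exact mul_le_mul_of_nonneg_left hSG hkG
  calc _ ≤ _ := norm_add₃_le
    _ ≤ _ := add_le_add (add_le_add (norm_sum_univ_erase_le j hsheep) hgoal)
        (norm_sum_univ_le hdog)
    _ = _ := by ring

theorem norm_fderiv_sheepDyn_update_sheep_le {LS : ℝ} (hLS : 0 < LS) {i j : Fin n} (hji : j ≠ i)
    (hS : LS ≤ ‖xS j - xS i‖) :
    ‖fderiv ℝ (fun y => sheepDyn kS kG kD R xG (Function.update xS j y) xD i) (xS j)‖
      ≤ |kS| * (1 + |R ^ 3| * (4 / LS ^ 3)) := by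
  simp_rw [sheepDyn_update_sheep_of_ne hji]
  exact ((((hasBoundedFDerivAt_one_sub_div_norm_pow_three_smul (R ^ 3) hLS hS).comp_sub_const
    (xS i)).const_smul kS).add_const _).norm_fderiv_le

theorem norm_fderiv_sheepDyn_update_dog_le {LD : ℝ} (hLD : 0 < LD) {i l : Fin n}
    (hD : LD ≤ ‖xS i - xD l‖) :
    ‖fderiv ℝ (fun y => sheepDyn kS kG kD R xG xS (Function.update xD l y) i) (xD l)‖
      ≤ |kD| * (4 / LD ^ 3) := by
  simp_rw [sheepDyn_update_dog i l]
  exact ((((hasBoundedFDerivAt_inv_norm_pow_three_smul hLD hD).comp_const_sub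
    (xS i)).const_smul kD).add_const _).norm_fderiv_le

theorem norm_fderiv_sheepDyn_update_self_le {LS LD : ℝ} (hLS : 0 < LS) (hLD : 0 < LD)
    (i : Fin n) (hSS : ∀ j ≠ i, LS ≤ ‖xS j - xS i‖) (hSD : ∀ l, LD ≤ ‖xS i - xD l‖) :
    ‖fderiv ℝ (fun y => sheepDyn kS kG kD R xG (Function.update xS i y) xD i) (xS i)‖
      ≤ ((n : ℝ) - 1) * (|kS| * (1 + |R ^ 3| * (4 / LS ^ 3))) + |kG| * 1
        + n * (|kD| * (4 / LD ^ 3)) := by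
  simp_rw [sheepDyn_update_self]
  have hsheep := HasBoundedFDerivAt.sum (s := univ.erase i) fun j hj =>
    ((hasBoundedFDerivAt_one_sub_div_norm_pow_three_smul (R ^ 3) hLS
      (hSS j (ne_of_mem_erase hj))).comp_const_sub (xS j)).const_smul kS
  have hgoal := ((hasBoundedFDerivAt_id (xG - xS i)).comp_const_sub xG).const_smul kG
  have hdog := HasBoundedFDerivAt.sum (s := univ) fun l _ =>
    ((hasBoundedFDerivAt_inv_norm_pow_three_smul hLD (hSD l)).comp_sub_const (xD l)).const_smul kD
  rw [Fin.cast_card_univ_erase] at hsheep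
  rw [card_univ, Fintype.card_fin] at hdog
  exact ((hsheep.add hgoal).add hdog).norm_fderiv_le

end SheepDynamics

theorem stmt_12 (n : ℕ) (kS kG kD R α β r Rp LS MS MG LD MP Umax : ℝ)
    (hkS : 0 < kS) (hkG : 0 < kG) (hkD : 0 < kD) (hR : 0 < R)
    (hα : 0 < α) (hβ : 0 < β) (hLS : 0 < LS) (hLD : 0 < LD)
    (xS xD : Fin n → EuclideanSpace ℝ (Fin 2))
    (xG xP : EuclideanSpace ℝ (Fin 2))
    (u : Fin n → EuclideanSpace ℝ (Fin 2))
    (i k : Fin n)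
    (hSS : ∀ j j' : Fin n, j ≠ j' → LS ≤ ‖xS j - xS j'‖ ∧ ‖xS j - xS j'‖ ≤ MS)
    (hSD : ∀ (j : Fin n) (l : Fin n), LD ≤ ‖xS j - xD l‖)
    (hSG : ∀ j : Fin n, ‖xS j - xG‖ ≤ MG)
    (hSP : ∀ j : Fin n, ‖xS j - xP‖ ≤ MP)
    (hU : ∀ l : Fin n, ‖u l‖ ≤ Umax)
    (hh : ‖xS i - xP‖ ^ 2 - (r + Rp) ^ 2 ≥ 0) :
    let f : Fin n → EuclideanSpace ℝ (Fin 2) := sheepDyn kS kG kD R xG xS xD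
    let JS : Fin n → EuclideanSpace ℝ (Fin 2) →L[ℝ] EuclideanSpace ℝ (Fin 2) := fun j =>
      fderiv ℝ (fun y => sheepDyn kS kG kD R xG (Function.update xS j y) xD i) (xS j)
    let JD : Fin n → EuclideanSpace ℝ (Fin 2) →L[ℝ] EuclideanSpace ℝ (Fin 2) := fun l =>
      fderiv ℝ (fun y => sheepDyn kS kG kD R xG xS (Function.update xD l y) i) (xD l)
    let bH : ℝ := ⟪f i, f i⟫ + (β / 2) * (‖xS i - xP‖ ^ 2 - (r + Rp) ^ 2) +
      ⟪xS i - xP,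
        (∑ j, JS j (f j)) + α • f i + ∑ l ∈ Finset.univ.erase k, JD l (u l)⟫
    let lamS : ℝ := Real.sqrt 2 * kS + (3 + Real.sqrt 2) * kS * R ^ 3 / LS ^ 3
    let lamD : ℝ := (3 + Real.sqrt 2) * kD / LD ^ 3
    let lamM : ℝ := ((n : ℝ) - 1) * kS * (Real.sqrt 2 + (3 + Real.sqrt 2) * R ^ 3 / LS ^ 3)
      + Real.sqrt 2 * kG + (n : ℝ) * (3 + Real.sqrt 2) * kD / LD ^ 3
    let Fmax : ℝ := max (kS * LS + kS * R ^ 3 / LS ^ 2) (kS * MS + kS * R ^ 3 / MS ^ 2)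
    bH ≥ -(α + lamM + ((n : ℝ) - 1) * lamS) * MP *
          (((n : ℝ) - 1) * Fmax + kG * MG + (n : ℝ) * kD / LD ^ 2)
        - ((n : ℝ) - 1) * lamD * MP * Umax := by
  intro f JS JD bH lamS lamD lamM Fmax
  have hn : (0 : ℝ) ≤ n - 1 := sub_nonneg.mpr (Nat.one_le_cast.mpr i.pos)
  have hf : ∀ j, ‖f j‖ ≤ ((n : ℝ) - 1) * Fmax + kG * MG + n * kD / LD ^ 2 := fun j =>
    norm_sheepDyn_le hkS.le hkG.le hkD.le hR.le hLS hLD j (fun j' hj' => hSS j' j hj') (hSD j)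
      (hSG j)
  have hJS : ∀ j ≠ i, ‖JS j‖ ≤ lamS := fun j hj => by
    refine (norm_fderiv_sheepDyn_update_sheep_le hLS hj (hSS j i hj).1).trans ?_
    rw [abs_of_pos hkS, abs_of_pos (pow_pos hR 3)]
    linear_combination add_four_mul_le_sqrt_two_mul_add hkS.le
      (by positivity : 0 ≤ kS * R ^ 3 / LS ^ 3)
  have hJSi : ‖JS i‖ ≤ lamM := by
    refine (norm_fderiv_sheepDyn_update_self_le hLS hLD i (fun j hj => (hSS j i hj).1)
      (hSD i)).trans ?_
    rw [abs_of_pos hkS, abs_of_pos (pow_pos hR 3), abs_of_pos hkG, abs_of_pos hkD]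
    linear_combination add_four_mul_le_sqrt_two_mul_add
      (add_nonneg (mul_nonneg hn hkS.le) hkG.le)
      (add_nonneg (mul_nonneg hn (by positivity : 0 ≤ kS * R ^ 3 / LS ^ 3))
        (by positivity : 0 ≤ n * (kD / LD ^ 3)))
  have hJD : ∀ l, ‖JD l‖ ≤ lamD := fun l => by
    refine (norm_fderiv_sheepDyn_update_dog_le hLD (hSD i l)).trans ?_
    rw [abs_of_pos hkD]
    linear_combination add_four_mul_le_sqrt_two_mul_add le_rfl (by positivity : 0 ≤ kD / LD ^ 3)
  have hinner := neg_mul_le_inner_of_norm_le (hSP i)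
    (norm_sum_apply_add_smul_add_sum_apply_le (k := k) hα.le hJSi hJS hJD hf hU)
  have hβh : 0 ≤ β / 2 * (‖xS i - xP‖ ^ 2 - (r + Rp) ^ 2) := mul_nonneg (by positivity) hh
  have hff : 0 ≤ ⟪f i, f i⟫ := real_inner_self_nonneg
  dsimp only [bH]
  linear_combination hinner + hβh + hff
end

section
/- Let h(x) = ‖x − x_P‖² − c² for c > 0 and suppose along a C² trajectory x(t) the inequality ḧ + αḣ + βh ≥ 0 holds with α = p₁ + p₂, β = p₁p₂, p₁,p₂ > 0, h(x(0)) > 0, ḣ(0) + p₁h(x(0)) > 0. Then ‖x(t) − x_P‖ > c for all t ≥ 0, i.e. the trajectory never enters the open ball of radius c around x_P. -/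
/-!
For the barrier `h t = ‖x t - xP‖² - c²`, the operator `ḧ + (p₁ + p₂) ḣ + p₁ p₂ h` factors as
`(d/dt + p₂) (d/dt + p₁) h`. A first-order inequality `ḟ + p f ≥ 0` says that
`e^{p t} f t` is nondecreasing, so it preserves positivity of `f` forward in time. Applied first
to `ḣ + p₁ h` and then to `h`, this keeps `h` positive, i.e. `x t` outside the closed disc.
-/

open scoped RealInnerProductSpace

open Real Set

theorem monotoneOn_exp_mul_of_deriv_add_mul_nonneg {f f' : ℝ → ℝ} {p : ℝ}
    (hf : ∀ t ≥ (0:ℝ), HasDerivAt f (f' t) t) (hineq : ∀ t ≥ (0:ℝ), 0 ≤ f' t + p * f t) :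
    MonotoneOn (fun t => exp (p * t) * f t) (Ici 0) := by
  have hderiv : ∀ t ≥ (0:ℝ),
      HasDerivAt (fun t => exp (p * t) * f t) (exp (p * t) * (f' t + p * f t)) t := by
    intro t ht
    have hexp : HasDerivAt (fun t => exp (p * t)) (exp (p * t) * p) t := by
      simpa using ((hasDerivAt_id t).const_mul p).exp
    exact (hexp.mul (hf t ht)).congr_deriv (by ring)
  refine monotoneOn_of_hasDerivWithinAt_nonneg (convex_Ici 0)
    (fun t ht => (hderiv t ht).continuousAt.continuousWithinAt)
    (fun t ht => (hderiv t (interior_subset ht)).hasDerivWithinAt) fun t ht => ?_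
  exact mul_nonneg (exp_nonneg _) (hineq t (interior_subset ht))

theorem pos_of_deriv_add_mul_nonneg {f f' : ℝ → ℝ} {p : ℝ}
    (hf : ∀ t ≥ (0:ℝ), HasDerivAt f (f' t) t) (hf0 : 0 < f 0)
    (hineq : ∀ t ≥ (0:ℝ), 0 ≤ f' t + p * f t) :
    ∀ t ≥ (0:ℝ), 0 < f t := by
  intro t ht
  have hmono := monotoneOn_exp_mul_of_deriv_add_mul_nonneg hf hineq
    (mem_Ici.mpr le_rfl) (mem_Ici.mpr ht) ht
  simp only [mul_zero, exp_zero, one_mul] at hmono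
  exact pos_of_mul_pos_right (hf0.trans_le hmono) (exp_pos _).le

theorem pos_of_second_deriv_add_mul_add_mul_nonneg {f f' f'' : ℝ → ℝ} {p₁ p₂ : ℝ}
    (hf : ∀ t ≥ (0:ℝ), HasDerivAt f (f' t) t) (hf' : ∀ t ≥ (0:ℝ), HasDerivAt f' (f'' t) t)
    (hf0 : 0 < f 0) (hf'0 : 0 < f' 0 + p₁ * f 0)
    (hineq : ∀ t ≥ (0:ℝ), 0 ≤ f'' t + (p₁ + p₂) * f' t + p₁ * p₂ * f t) :
    ∀ t ≥ (0:ℝ), 0 < f t := by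
  have hfirst : ∀ t ≥ (0:ℝ), 0 < f' t + p₁ * f t := by
    refine pos_of_deriv_add_mul_nonneg (f' := fun t => f'' t + p₁ * f' t) (p := p₂)
      (fun t ht => (hf' t ht).add ((hf t ht).const_mul p₁)) hf'0 fun t ht => ?_
    linarith [hineq t ht]
  exact pos_of_deriv_add_mul_nonneg hf hf0 fun t ht => (hfirst t ht).le

section SquaredDistance

variable {E : Type*} [NormedAddCommGroup E] [InnerProductSpace ℝ E]
  {x x' x'' : ℝ → E} {a : E} {t : ℝ}

theorem HasDerivAt.norm_sub_sq (hx : HasDerivAt x (x' t) t) :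
    HasDerivAt (fun s => ‖x s - a‖ ^ 2) (2 * ⟪x t - a, x' t⟫) t :=
  (hx.sub_const a).norm_sq

theorem HasDerivAt.two_mul_inner_sub (hx : HasDerivAt x (x' t) t)
    (hx' : HasDerivAt x' (x'' t) t) :
    HasDerivAt (fun s => 2 * ⟪x s - a, x' s⟫)
      (2 * ⟪x' t, x' t⟫ + 2 * ⟪x t - a, x'' t⟫) t := by
  exact (((hx.sub_const a).inner ℝ hx').const_mul 2).congr_deriv (by ring)

end SquaredDistance

theorem stmt_15_general (x x' x'' : ℝ → EuclideanSpace ℝ (Fin 2))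
    (xP : EuclideanSpace ℝ (Fin 2)) (c p₁ p₂ : ℝ)
    (hd : ∀ t ≥ (0:ℝ), HasDerivAt x (x' t) t)
    (hd' : ∀ t ≥ (0:ℝ), HasDerivAt x' (x'' t) t)
    (h0 : ‖x 0 - xP‖ ^ 2 - c ^ 2 > 0)
    (hv0 : 2 * ⟪x 0 - xP, x' 0⟫ + p₁ * (‖x 0 - xP‖ ^ 2 - c ^ 2) > 0)
    (hineq : ∀ t ≥ (0:ℝ),
      (2 * ⟪x' t, x' t⟫ + 2 * ⟪x t - xP, x'' t⟫)
        + (p₁ + p₂) * (2 * ⟪x t - xP, x' t⟫)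
        + (p₁ * p₂) * (‖x t - xP‖ ^ 2 - c ^ 2) ≥ 0) :
    ∀ t ≥ (0:ℝ), ‖x t - xP‖ > c := by
  have hbarrier : ∀ t ≥ (0:ℝ), 0 < ‖x t - xP‖ ^ 2 - c ^ 2 :=
    pos_of_second_deriv_add_mul_add_mul_nonneg
      (fun t ht => ((hd t ht).norm_sub_sq).sub_const (c ^ 2))
      (fun t ht => (hd t ht).two_mul_inner_sub (hd' t ht)) h0 hv0 hineq
  intro t ht
  exact lt_of_abs_lt (abs_lt_of_sq_lt_sq (sub_pos.mp (hbarrier t ht)) (norm_nonneg _))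

theorem stmt_15 (x x' x'' : ℝ → EuclideanSpace ℝ (Fin 2))
    (xP : EuclideanSpace ℝ (Fin 2)) (c p₁ p₂ : ℝ)
    (hc : 0 < c) (hp₁ : 0 < p₁) (hp₂ : 0 < p₂)
    (hd : ∀ t ≥ (0:ℝ), HasDerivAt x (x' t) t)
    (hd' : ∀ t ≥ (0:ℝ), HasDerivAt x' (x'' t) t)
    (h0 : ‖x 0 - xP‖ ^ 2 - c ^ 2 > 0)
    (hv0 : 2 * ⟪x 0 - xP, x' 0⟫ + p₁ * (‖x 0 - xP‖ ^ 2 - c ^ 2) > 0)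
    (hineq : ∀ t ≥ (0:ℝ),
      (2 * ⟪x' t, x' t⟫ + 2 * ⟪x t - xP, x'' t⟫)
        + (p₁ + p₂) * (2 * ⟪x t - xP, x' t⟫)
        + (p₁ * p₂) * (‖x t - xP‖ ^ 2 - c ^ 2) ≥ 0) :
    ∀ t ≥ (0:ℝ), ‖x t - xP‖ > c :=
  stmt_15_general x x' x'' xP c p₁ p₂ hd hd' h0 hv0 hineq
end
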